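/- Let f: ℝ^d → ℝ be differentiable, convex and L-smooth, with a minimizer x⋆ where ∇f(x⋆) = 0, and let γ > 0. Then for any x ∈ ℝ^d: f(prox_{γf}(x)) − f(x⋆) ≥ (1/(1+γL)²) (f(x) − f(x⋆)). -/

import Mathlib

/-!
Optimality of the prox point `p` gives `x - p = γ ∇f(p)`. The descent lemma for `L`-smooth `f`
at `p` then bounds `f x - f p` by `(γ + γ²L/2) ‖∇f(p)‖²`, and a gradient step of length `1/L`
from `p`, which cannot go below the minimum `f x⋆`, gives `‖∇f(p)‖² ≤ 2L (f p - f x⋆)`.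
Together, `f x - f x⋆ ≤ (1 + γL)² (f p - f x⋆)`.
-/

open Set InnerProductSpace

section

variable {E : Type*} [NormedAddCommGroup E] [InnerProductSpace ℝ E] [CompleteSpace E]
  {f : E → ℝ} {f' : E} {g : E → E} {L : ℝ}

theorem IsLocalMin.hasGradientAt_eq_zero {a : E} (h : IsLocalMin f a)
    (hf : HasGradientAt f f' a) : f' = 0 := by
  simpa using h.hasFDerivAt_eq_zero hf

theorem HasGradientAt.add_mul_norm_sub_sq {p : E} (hf : HasGradientAt f f' p) (c : ℝ) (x : E) :
    HasGradientAt (fun z => f z + c * ‖z - x‖ ^ 2) (f' + (2 * c) • (p - x)) p := by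
  have hq := ((hasFDerivAt_id p).sub_const x).norm_sq.const_mul c
  refine (hf.hasFDerivAt.add hq).congr_fderiv ?_
  ext w
  simp only [add_apply, toDual_apply_apply, smul_apply, ContinuousLinearMap.comp_id,
    coe_innerSL_apply, inner_add_left, real_inner_smul_left, nsmul_eq_mul, smul_eq_mul, id_eq]
  ring

theorem HasGradientAt.hasDerivAt_comp_add_smul {x v : E} {t : ℝ}
    (hf : HasGradientAt f f' (x + t • v)) :
    HasDerivAt (fun s : ℝ => f (x + s • v)) ⟪f', v⟫_ℝ t := by
  have hline : HasDerivAt (fun s : ℝ => x + s • v) v t := by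
    simpa using ((hasDerivAt_id t).smul_const v).const_add x
  simpa [Function.comp_def] using hf.hasFDerivAt.comp_hasDerivAt t hline

theorem ConvexOn.add_inner_le_of_hasGradientAt (hconv : ConvexOn ℝ univ f) {x : E}
    (hf : HasGradientAt f f' x) (y : E) : f x + ⟪f', y - x⟫_ℝ ≤ f y := by
  have hline : ConvexOn ℝ univ (fun t : ℝ => f (x + t • (y - x))) := by
    have hcomp : (fun t : ℝ => f (x + t • (y - x))) = f ∘ AffineMap.lineMap x y := by
      ext t
      simp [AffineMap.lineMap_apply_module', add_comm]
    simpa [hcomp] using hconv.comp_affineMap (AffineMap.lineMap x y)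
  have hderiv : HasDerivAt (fun t : ℝ => f (x + t • (y - x))) ⟪f', y - x⟫_ℝ 0 :=
    HasGradientAt.hasDerivAt_comp_add_smul (by simpa using hf)
  have hslope := hline.le_slope_of_hasDerivAt (mem_univ 0) (mem_univ 1) zero_lt_one hderiv
  simp only [slope, sub_zero, inv_one, one_smul, zero_smul, add_zero, add_sub_cancel,
    vsub_eq_sub, smul_eq_mul, one_mul] at hslope
  linarith

theorem ConvexOn.le_of_hasGradientAt_eq_zero (hconv : ConvexOn ℝ univ f) {x : E}
    (hf : HasGradientAt f 0 x) (y : E) : f x ≤ f y := by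
  simpa using hconv.add_inner_le_of_hasGradientAt hf y

theorem le_add_inner_add_sq_of_lipschitz_gradient (hgrad : ∀ x, HasGradientAt f (g x) x)
    (hlip : ∀ x y, ‖g x - g y‖ ≤ L * ‖x - y‖) (x y : E) :
    f y ≤ f x + ⟪g x, y - x⟫_ℝ + L / 2 * ‖y - x‖ ^ 2 := by
  set v := y - x
  -- the gap between `f` and its quadratic upper model along the segment is antitone
  let φ : ℝ → ℝ := fun t => f (x + t • v) - t * ⟪g x, v⟫_ℝ - L / 2 * t ^ 2 * ‖v‖ ^ 2
  have hφ (t : ℝ) : HasDerivAt φ (⟪g (x + t • v) - g x, v⟫_ℝ - L * t * ‖v‖ ^ 2) t := by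
    have hquad : HasDerivAt (fun t : ℝ => L / 2 * t ^ 2 * ‖v‖ ^ 2) (L * t * ‖v‖ ^ 2) t :=
      (((hasDerivAt_pow 2 t).const_mul (L / 2)).mul_const (‖v‖ ^ 2)).congr_deriv
        (by push_cast; ring)
    exact ((((hgrad _).hasDerivAt_comp_add_smul).sub
      ((hasDerivAt_id t).mul_const ⟪g x, v⟫_ℝ)).sub hquad).congr_deriv
      (by rw [inner_sub_left, one_mul])
  have hφ_nonpos (t : ℝ) (ht : 0 < t) : ⟪g (x + t • v) - g x, v⟫_ℝ - L * t * ‖v‖ ^ 2 ≤ 0 := by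
    have hdiff : ‖g (x + t • v) - g x‖ ≤ L * (t * ‖v‖) := by
      simpa [norm_smul, abs_of_pos ht] using hlip (x + t • v) x
    have := real_inner_le_norm (g (x + t • v) - g x) v
    nlinarith [mul_le_mul_of_nonneg_right hdiff (norm_nonneg v)]
  have hanti : AntitoneOn φ (Ici 0) := by
    refine antitoneOn_of_hasDerivWithinAt_nonpos (convex_Ici 0)
      (fun t _ => (hφ t).continuousAt.continuousWithinAt) (fun t _ => (hφ t).hasDerivWithinAt) ?_
    rw [interior_Ici]
    exact hφ_nonpos
  have := hanti self_mem_Ici (mem_Ici.2 zero_le_one) zero_le_one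
  simp only [φ, v, zero_smul, add_zero, one_smul, add_sub_cancel, zero_mul, one_mul, one_pow,
    mul_one, zero_pow two_ne_zero, mul_zero, sub_zero] at this
  linarith

theorem norm_sq_le_of_lipschitz_gradient (hL : 0 < L) (hgrad : ∀ x, HasGradientAt f (g x) x)
    (hlip : ∀ x y, ‖g x - g y‖ ≤ L * ‖x - y‖) {m : ℝ} (hm : ∀ z, m ≤ f z) (x : E) :
    ‖g x‖ ^ 2 ≤ 2 * L * (f x - m) := by
  have hstep := le_add_inner_add_sq_of_lipschitz_gradient hgrad hlip x (x - L⁻¹ • g x)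
  simp only [sub_sub_cancel_left, inner_neg_right, real_inner_smul_right, norm_neg, norm_smul,
    real_inner_self_eq_norm_sq, Real.norm_eq_abs, abs_of_pos (inv_pos.2 hL)] at hstep
  have hdecrease : f (x - L⁻¹ • g x) ≤ f x - ‖g x‖ ^ 2 / (2 * L) := by
    convert hstep using 1
    field_simp
    ring
  calc ‖g x‖ ^ 2 = 2 * L * (‖g x‖ ^ 2 / (2 * L)) := by field_simp
    _ ≤ 2 * L * (f x - m) := by
      gcongr
      linarith [hm (x - L⁻¹ • g x)]

theorem sub_eq_smul_gradient_of_prox {γ : ℝ} (hγ : γ ≠ 0) {x p : E}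
    (hp : ∀ z, f p + (1 / (2 * γ)) * ‖p - x‖ ^ 2 ≤ f z + (1 / (2 * γ)) * ‖z - x‖ ^ 2)
    (hf : HasGradientAt f f' p) : x - p = γ • f' := by
  have hstat := IsLocalMin.hasGradientAt_eq_zero (Filter.Eventually.of_forall hp)
    (hf.add_mul_norm_sub_sq (1 / (2 * γ)) x)
  have hscaled : γ • (f' + (2 * (1 / (2 * γ))) • (p - x)) = 0 := by rw [hstat, smul_zero]
  rw [smul_add, smul_smul, show γ * (2 * (1 / (2 * γ))) = 1 by field_simp, one_smul] at hscaled
  rw [eq_comm, ← sub_eq_zero, ← hscaled]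
  abel

end

/-- Let `f : ℝ^d → ℝ` be differentiable, convex and `L`-smooth, with a minimizer `x⋆` where
`∇f(x⋆) = 0`, and let `γ > 0`. Then for any `x` and any `p = prox_{γf}(x)` (the minimizer of
`z ↦ f(z) + (1/(2γ))‖z − x‖²`):
`f(p) − f(x⋆) ≥ (1/(1+γL)²) (f(x) − f(x⋆))`. -/
theorem stmt13 {d : ℕ} (L γ : ℝ) (hL : 0 < L) (hγ : 0 < γ)
    (f : EuclideanSpace ℝ (Fin d) → ℝ)
    (g : EuclideanSpace ℝ (Fin d) → EuclideanSpace ℝ (Fin d))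
    (hconv : ConvexOn ℝ Set.univ f)
    (hgrad : ∀ x, HasGradientAt f (g x) x)
    (hlip : ∀ x y, ‖g x - g y‖ ≤ L * ‖x - y‖)
    (xs : EuclideanSpace ℝ (Fin d)) (hxs : g xs = 0) :
    ∀ (x p : EuclideanSpace ℝ (Fin d)),
      (∀ z, f p + (1 / (2 * γ)) * ‖p - x‖ ^ 2 ≤ f z + (1 / (2 * γ)) * ‖z - x‖ ^ 2) →
      f p - f xs ≥ (1 / (1 + γ * L) ^ 2) * (f x - f xs) := by
  intro x p hp
  have hxp : x - p = γ • g p := sub_eq_smul_gradient_of_prox hγ.ne' hp (hgrad p)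
  have hmin : ∀ z, f xs ≤ f z := hconv.le_of_hasGradientAt_eq_zero (hxs ▸ hgrad xs)
  have hdescent : f x ≤ f p + (γ + L / 2 * γ ^ 2) * ‖g p‖ ^ 2 := by
    have hbound := le_add_inner_add_sq_of_lipschitz_gradient hgrad hlip p x
    rw [hxp, real_inner_smul_right, real_inner_self_eq_norm_sq, norm_smul, Real.norm_eq_abs,
      abs_of_pos hγ] at hbound
    linarith
  have hgp := norm_sq_le_of_lipschitz_gradient hL hgrad hlip hmin p
  rw [ge_iff_le, one_div, inv_mul_le_iff₀ (by positivity)]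
  have hcoef : 0 ≤ γ + L / 2 * γ ^ 2 := by positivity
  linear_combination hdescent + mul_le_mul_of_nonneg_left hgp hcoef
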